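/- arXiv:2209.15358 — 2 statements merged into one kernel-verified Lean document; each statement's English description precedes it below -/
import Mathlib

section
/- Let k ≥ 2 be a natural number and let α, β, γ ≥ 0. If a real number X ≥ 0 satisfies X^k ≤ (4/3)α + (4/3)β X^(k-1) + (4/3)γ X^(k-2), then X ≤ (4/3)β + √((4/3)γ) + ((4/3)α)^(1/k). -/
theorem stmt0 (k : ℕ) (hk : 2 ≤ k) (α β γ X : ℝ)
    (hα : 0 ≤ α) (hβ : 0 ≤ β) (hγ : 0 ≤ γ) (hX : 0 ≤ X)
    (h : X ^ k ≤ (4/3) * α + (4/3) * β * X ^ (k - 1) + (4/3) * γ * X ^ (k - 2)) :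
    X ≤ (4/3) * β + Real.sqrt ((4/3) * γ) + ((4/3) * α) ^ ((1 : ℝ) / k) := by
  by_contra hlt
  push_neg at hlt
  set A := (4/3) * α with hAdef
  set B := (4/3) * β with hBdef
  set C := (4/3) * γ with hCdef
  have hA0 : (0:ℝ) ≤ A := by positivity
  have hB0 : (0:ℝ) ≤ B := by positivity
  have hC0 : (0:ℝ) ≤ C := by positivity
  have hs : 0 ≤ Real.sqrt C := Real.sqrt_nonneg _
  have hr : 0 ≤ A ^ ((1:ℝ)/k) := Real.rpow_nonneg hA0 _
  have hX0 : 0 < X := lt_of_le_of_lt (by positivity) hlt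
  have h1 : X ^ k = X * X ^ (k - 1) := by
    rw [← pow_succ']; congr 1; omega
  have h2 : X ^ (k - 1) = X * X ^ (k - 2) := by
    rw [← pow_succ']; congr 1; omega
  have hXs : Real.sqrt C ≤ X := le_of_lt (lt_of_le_of_lt (by linarith) hlt)
  have hXr : A ^ ((1:ℝ)/k) ≤ X := le_of_lt (lt_of_le_of_lt (by linarith) hlt)
  -- A = (A^{1/k})^k
  have hAk : (A ^ ((1:ℝ)/k)) ^ k = A := by
    rw [← Real.rpow_natCast (A ^ ((1:ℝ)/k)) k, ← Real.rpow_mul hA0]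
    rw [one_div, inv_mul_cancel₀ (by exact_mod_cast Nat.pos_of_ne_zero (by omega) |>.ne')]
    exact Real.rpow_one A
  have hkk : (A ^ ((1:ℝ)/k)) ^ k = A ^ ((1:ℝ)/k) * (A ^ ((1:ℝ)/k)) ^ (k - 1) := by
    rw [← pow_succ']; congr 1; omega
  have t2 : A ≤ A ^ ((1:ℝ)/k) * X ^ (k - 1) := by
    nth_rewrite 1 [← hAk]
    rw [hkk]
    exact mul_le_mul_of_nonneg_left (pow_le_pow_left₀ hr hXr _) hr
  have hCs : C = Real.sqrt C * Real.sqrt C := (Real.mul_self_sqrt hC0).symm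
  have t1 : C * X ^ (k - 2) ≤ Real.sqrt C * X ^ (k - 1) := by
    rw [h2]
    nth_rewrite 1 [hCs]
    rw [mul_assoc]
    exact mul_le_mul_of_nonneg_left
      (mul_le_mul_of_nonneg_right hXs (pow_nonneg hX _)) hs
  have hpow : 0 < X ^ (k - 1) := pow_pos hX0 _
  have key : (B + Real.sqrt C + A ^ ((1:ℝ)/k)) * X ^ (k - 1) < X * X ^ (k - 1) :=
    mul_lt_mul_of_pos_right hlt hpow
  rw [← h1] at key
  nlinarith [key, t1, t2, h]
end

section
/- Let w be a C² function with w ≥ 1 and define w_ε = w/(1+εw) for ε > 0. Suppose there exist constants η, c₂, c₃ > 0 and a function W₁ ≥ 1 such that |Q∇w| ≤ c₂ W₁^(1/(2k)), |QD²w| ≤ c₃ W₁^(1/k), and ⟨Qξ,ξ⟩ ≥ η|ξ|². Then |QD²w_ε| ≤ (c₃ + 2η^(−1)c₂²) W₁^(1/k). -/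
open Matrix

/-- Euclidean norm of a vector. -/
noncomputable def vnorm {d : ℕ} (v : Fin d → ℝ) : ℝ := Real.sqrt (∑ i, v i ^ 2)

/-- Frobenius norm of a matrix. -/
noncomputable def fnorm {d : ℕ} (M : Matrix (Fin d) (Fin d) ℝ) : ℝ :=
  Real.sqrt (∑ i, ∑ j, M i j ^ 2)

/-- Partial derivative in the `i`-th coordinate direction. -/
noncomputable def pd {d : ℕ} (i : Fin d) (f : (Fin d → ℝ) → ℝ) (x : Fin d → ℝ) : ℝ :=
  deriv (fun t => f (Function.update x i t)) (x i)

/-- Hessian matrix of a function. -/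
noncomputable def hess {d : ℕ} (f : (Fin d → ℝ) → ℝ) (x : Fin d → ℝ) :
    Matrix (Fin d) (Fin d) ℝ :=
  Matrix.of fun i j => pd i (fun y => pd j f y) x

/-!
Writing `w_ε = g ∘ w` with `g s = s / (1 + ε s)`, the chain rule gives
`Q D²w_ε = g'(w) Q D²w + g''(w) (Q∇w) ⊗ ∇w`, with `g' = (1 + ε s)⁻²` and `g'' = -2ε (1 + ε s)⁻³`
bounded by `1` and `2` for `w ≥ 1`. The rank-one term has Frobenius norm `|Q∇w| |∇w|`, and
ellipticity with Cauchy–Schwarz gives `η |∇w| ≤ |Q∇w|`, so it is at most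
`η⁻¹ |Q∇w|² ≤ η⁻¹ c₂² W₁^(1/k)`.
-/

lemma vnorm_eq_norm {d : ℕ} (v : Fin d → ℝ) : vnorm v = ‖WithLp.toLp 2 v‖ := by
  simp [vnorm, EuclideanSpace.norm_eq, sq_abs]

lemma fnorm_eq_norm {d : ℕ} (M : Matrix (Fin d) (Fin d) ℝ) :
    fnorm M = ‖WithLp.toLp 2 (fun p : Fin d × Fin d => M p.1 p.2)‖ := by
  simp [fnorm, EuclideanSpace.norm_eq, sq_abs, Fintype.sum_prod_type]

lemma vnorm_nonneg {d : ℕ} (v : Fin d → ℝ) : 0 ≤ vnorm v :=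
  Real.sqrt_nonneg _

lemma fnorm_nonneg {d : ℕ} (M : Matrix (Fin d) (Fin d) ℝ) : 0 ≤ fnorm M :=
  Real.sqrt_nonneg _

lemma fnorm_smul_add_smul_le {d : ℕ} (a b : ℝ) (M N : Matrix (Fin d) (Fin d) ℝ) :
    fnorm (a • M + b • N) ≤ |a| * fnorm M + |b| * fnorm N := by
  simp only [fnorm_eq_norm, ← Real.norm_eq_abs, ← norm_smul]
  exact norm_add_le (a • WithLp.toLp 2 (fun p : Fin d × Fin d => M p.1 p.2))
    (b • WithLp.toLp 2 (fun p : Fin d × Fin d => N p.1 p.2))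

lemma fnorm_vecMulVec {d : ℕ} (u v : Fin d → ℝ) : fnorm (vecMulVec u v) = vnorm u * vnorm v := by
  rw [fnorm, vnorm, vnorm, ← Real.sqrt_mul (by positivity), Finset.sum_mul]
  simp_rw [Finset.mul_sum, vecMulVec_apply, mul_pow]

lemma dotProduct_le_vnorm_mul_vnorm {d : ℕ} (u v : Fin d → ℝ) : u ⬝ᵥ v ≤ vnorm u * vnorm v := by
  rw [vnorm_eq_norm, vnorm_eq_norm]
  refine le_of_eq_of_le ?_ (real_inner_le_norm (WithLp.toLp 2 u) (WithLp.toLp 2 v))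
  simp [PiLp.inner_apply, dotProduct, mul_comm]

lemma vnorm_le_inv_mul_vnorm_mulVec {d : ℕ} {η : ℝ} (hη : 0 < η) {A : Matrix (Fin d) (Fin d) ℝ}
    {ξ : Fin d → ℝ} (hA : η * vnorm ξ ^ 2 ≤ A *ᵥ ξ ⬝ᵥ ξ) : vnorm ξ ≤ η⁻¹ * vnorm (A *ᵥ ξ) := by
  rw [le_inv_mul_iff₀ hη]
  rcases (vnorm_nonneg ξ).eq_or_lt with hξ | hξ
  · rw [← hξ, mul_zero]
    exact vnorm_nonneg _
  · refine le_of_mul_le_mul_right ?_ hξ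
    rw [mul_assoc, ← sq]
    exact hA.trans (dotProduct_le_vnorm_mul_vnorm (A *ᵥ ξ) ξ)

lemma fnorm_vecMulVec_mulVec_le {d : ℕ} {η : ℝ} (hη : 0 < η) {A : Matrix (Fin d) (Fin d) ℝ}
    {ξ : Fin d → ℝ} (hA : η * vnorm ξ ^ 2 ≤ A *ᵥ ξ ⬝ᵥ ξ) :
    fnorm (vecMulVec (A *ᵥ ξ) ξ) ≤ η⁻¹ * vnorm (A *ᵥ ξ) ^ 2 := by
  rw [fnorm_vecMulVec]
  calc vnorm (A *ᵥ ξ) * vnorm ξ ≤ vnorm (A *ᵥ ξ) * (η⁻¹ * vnorm (A *ᵥ ξ)) :=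
        mul_le_mul_of_nonneg_left (vnorm_le_inv_mul_vnorm_mulVec hη hA) (vnorm_nonneg _)
    _ = η⁻¹ * vnorm (A *ᵥ ξ) ^ 2 := by ring

section Calculus

variable {d : ℕ} {f : (Fin d → ℝ) → ℝ} {x : Fin d → ℝ}

lemma hasDerivAt_pd (hf : DifferentiableAt ℝ f x) (i : Fin d) :
    HasDerivAt (fun t => f (Function.update x i t)) (pd i f x) (x i) := by
  rw [← Function.update_eq_self i x] at hf
  exact (hf.hasFDerivAt.comp_hasDerivAt _ (hasDerivAt_update x i (x i))).differentiableAt.hasDerivAt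

lemma pd_comp {g : ℝ → ℝ} {g' : ℝ} (hg : HasDerivAt g g' (f x)) (hf : DifferentiableAt ℝ f x)
    (i : Fin d) : pd i (fun y => g (f y)) x = g' * pd i f x := by
  rw [← Function.update_eq_self i x] at hg
  exact (hg.comp (x i) (hasDerivAt_pd hf i)).deriv

lemma pd_mul {g : (Fin d → ℝ) → ℝ} (hf : DifferentiableAt ℝ f x) (hg : DifferentiableAt ℝ g x)
    (i : Fin d) : pd i (fun y => f y * g y) x = pd i f x * g x + f x * pd i g x := by
  have h := ((hasDerivAt_pd hf i).mul (hasDerivAt_pd hg i)).deriv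
  rwa [Function.update_eq_self] at h

lemma pd_eq_fderiv (hf : DifferentiableAt ℝ f x) (i : Fin d) :
    pd i f x = fderiv ℝ f x (Pi.single i 1) := by
  rw [← Function.update_eq_self i x] at hf
  have h := (hf.hasFDerivAt.comp_hasDerivAt _ (hasDerivAt_update x i (x i))).deriv
  rwa [Function.update_eq_self] at h

lemma differentiable_pd (hf : ContDiff ℝ 2 f) (i : Fin d) : Differentiable ℝ (pd i f) := by
  have hfd : Differentiable ℝ f := hf.differentiable (by norm_num)
  rw [show pd i f = fun y => fderiv ℝ f y (Pi.single i 1) from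
    funext fun y => pd_eq_fderiv (hfd y) i]
  exact ((hf.fderiv_right (m := 1) (by norm_num)).differentiable (by norm_num)).clm_apply
    (differentiable_const _)

lemma hess_comp {g g' : ℝ → ℝ} {g'' : ℝ} (hf : ContDiff ℝ 2 f)
    (hg : ∀ y, HasDerivAt g (g' (f y)) (f y)) (hg' : HasDerivAt g' g'' (f x)) (i j : Fin d) :
    hess (fun y => g (f y)) x i j = g'' * pd i f x * pd j f x + g' (f x) * hess f x i j := by
  have hfd : Differentiable ℝ f := hf.differentiable (by norm_num)
  have hpd : pd j (fun y => g (f y)) = fun y => g' (f y) * pd j f y :=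
    funext fun y => pd_comp (hg y) (hfd y) j
  change pd i (pd j (fun y => g (f y))) x = _
  rw [hpd, pd_mul (f := fun y => g' (f y)) (hg'.differentiableAt.comp x (hfd x))
    (differentiable_pd hf j x), pd_comp hg' (hfd x)]
  rfl

lemma mul_hess_comp (A : Matrix (Fin d) (Fin d) ℝ) {g g' : ℝ → ℝ} {g'' : ℝ} (hf : ContDiff ℝ 2 f)
    (hg : ∀ y, HasDerivAt g (g' (f y)) (f y)) (hg' : HasDerivAt g' g'' (f x)) :
    A * hess (fun y => g (f y)) x = g' (f x) • (A * hess f x)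
      + g'' • vecMulVec (A *ᵥ fun i => pd i f x) fun i => pd i f x := by
  have hH : hess (fun y => g (f y)) x = g' (f x) • hess f x
      + g'' • vecMulVec (fun i => pd i f x) fun i => pd i f x := by
    ext i j
    rw [hess_comp hf hg hg']
    simp only [Matrix.add_apply, Matrix.smul_apply, vecMulVec_apply, smul_eq_mul]
    ring
  rw [hH, Matrix.mul_add, Matrix.mul_smul, Matrix.mul_smul, mul_vecMulVec]

end Calculus

lemma hasDerivAt_div_one_add_mul {ε s : ℝ} (hs : 1 + ε * s ≠ 0) :
    HasDerivAt (fun s => s / (1 + ε * s)) ((1 + ε * s) ^ 2)⁻¹ s := by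
  refine ((hasDerivAt_id' s).fun_div (((hasDerivAt_id' s).const_mul ε).const_add 1) hs)
    |>.congr_deriv ?_
  field_simp
  ring

lemma hasDerivAt_inv_one_add_mul_sq {ε s : ℝ} (hs : 1 + ε * s ≠ 0) :
    HasDerivAt (fun s => ((1 + ε * s) ^ 2)⁻¹) (-(2 * ε) * ((1 + ε * s) ^ 3)⁻¹) s := by
  refine ((((hasDerivAt_id' s).const_mul ε).const_add 1).fun_pow 2).fun_inv
    (pow_ne_zero 2 hs) |>.congr_deriv ?_
  field_simp
  ring

lemma rpow_one_div_two_mul_sq {x : ℝ} (hx : 0 ≤ x) (k : ℝ) :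
    (x ^ (1 / (2 * k))) ^ 2 = x ^ (1 / k) := by
  rw [← Real.rpow_mul_natCast hx]
  ring_nf

theorem stmt9_general (d : ℕ) (η c₂ c₃ k ε : ℝ) (hη : 0 < η) (hε : 0 < ε)
    (Q : (Fin d → ℝ) → Matrix (Fin d) (Fin d) ℝ)
    (w W₁ : (Fin d → ℝ) → ℝ) (hw : ContDiff ℝ 2 w)
    (hw1 : ∀ x, 1 ≤ w x) (hW₁ : ∀ x, 1 ≤ W₁ x)
    (hell : ∀ (x ξ : Fin d → ℝ), η * vnorm ξ ^ 2 ≤ (Q x).mulVec ξ ⬝ᵥ ξ)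
    (hQg : ∀ x, vnorm ((Q x).mulVec (fun i => pd i w x)) ≤ c₂ * W₁ x ^ (1 / (2 * k)))
    (hQH : ∀ x, fnorm (Q x * hess w x) ≤ c₃ * W₁ x ^ (1 / k)) :
    ∀ x, fnorm (Q x * hess (fun y => w y / (1 + ε * w y)) x)
      ≤ (c₃ + 2 * η⁻¹ * c₂ ^ 2) * W₁ x ^ (1 / k) := by
  intro x
  have hpos (y : Fin d → ℝ) : 0 < 1 + ε * w y := by nlinarith [hw1 y]
  rw [mul_hess_comp (Q x) hw (fun y => hasDerivAt_div_one_add_mul (hpos y).ne')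
    (hasDerivAt_inv_one_add_mul_sq (hpos x).ne')]
  set s := 1 + ε * w x
  have hs : 1 + ε ≤ s := by nlinarith [hw1 x]
  have hs0 : 0 < s := hpos x
  have hfirst : |(s ^ 2)⁻¹| ≤ 1 := by
    rw [abs_of_pos (by positivity)]
    exact inv_le_one_of_one_le₀ (by nlinarith)
  have hsecond : |-(2 * ε) * (s ^ 3)⁻¹| ≤ 2 := by
    rw [abs_mul, abs_neg, abs_of_pos (by positivity), abs_of_pos (by positivity),
      ← div_eq_mul_inv, div_le_iff₀ (by positivity)]
    nlinarith
  have hrank : fnorm (vecMulVec (Q x *ᵥ fun i => pd i w x) fun i => pd i w x)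
      ≤ η⁻¹ * (c₂ * W₁ x ^ (1 / (2 * k))) ^ 2 :=
    (fnorm_vecMulVec_mulVec_le hη (hell x _)).trans (by gcongr; exacts [vnorm_nonneg _, hQg x])
  calc _ ≤ _ := fnorm_smul_add_smul_le _ _ _ _
    _ ≤ 1 * (c₃ * W₁ x ^ (1 / k)) + 2 * (η⁻¹ * (c₂ * W₁ x ^ (1 / (2 * k))) ^ 2) :=
      add_le_add (mul_le_mul hfirst (hQH x) (fnorm_nonneg _) zero_le_one)
        (mul_le_mul hsecond hrank (fnorm_nonneg _) zero_le_two)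
    _ = (c₃ + 2 * η⁻¹ * c₂ ^ 2) * W₁ x ^ (1 / k) := by
      rw [mul_pow, rpow_one_div_two_mul_sq (zero_le_one.trans (hW₁ x))]
      ring

theorem stmt9 (d : ℕ) (η c₂ c₃ k ε : ℝ) (hη : 0 < η) (hc₂ : 0 < c₂) (hc₃ : 0 < c₃)
    (hk : 0 < k) (hε : 0 < ε)
    (Q : (Fin d → ℝ) → Matrix (Fin d) (Fin d) ℝ)
    (w W₁ : (Fin d → ℝ) → ℝ) (hw : ContDiff ℝ 2 w)
    (hw1 : ∀ x, 1 ≤ w x) (hW₁ : ∀ x, 1 ≤ W₁ x)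
    (hsymm : ∀ x, (Q x).IsSymm)
    (hell : ∀ (x ξ : Fin d → ℝ), η * vnorm ξ ^ 2 ≤ (Q x).mulVec ξ ⬝ᵥ ξ)
    (hQg : ∀ x, vnorm ((Q x).mulVec (fun i => pd i w x)) ≤ c₂ * W₁ x ^ (1 / (2 * k)))
    (hQH : ∀ x, fnorm (Q x * hess w x) ≤ c₃ * W₁ x ^ (1 / k)) :
    ∀ x, fnorm (Q x * hess (fun y => w y / (1 + ε * w y)) x)
      ≤ (c₃ + 2 * η⁻¹ * c₂ ^ 2) * W₁ x ^ (1 / k) :=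
  stmt9_general d η c₂ c₃ k ε hη hε Q w W₁ hw hw1 hW₁ hell hQg hQH
end
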